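/- Let (Mₙ) satisfy M_{n+1} = [[Mₙ, -I],[I, Mₙ+2I]]. Then for any λ ∈ k and n ≥ 0, det(M_{n+1} + λI) = det(M₁ + (λ+n)I)^{2ⁿ}. In particular, if det(M₁ + nI) ≠ 0 for all n ≥ 0, then every M_{n+1} is invertible. -/

import Mathlib

/-- Index types for the iterated block construction: `Iter ι n` indexes the rows of
`M_{n+1}` when `ι` indexes the rows of `M₁`. -/
def Iter (ι : Type) : ℕ → Type
  | 0 => ι
  | n + 1 => Iter ι n ⊕ Iter ι n

def iterFintype {ι : Type} [Fintype ι] : (n : ℕ) → Fintype (Iter ι n)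
  | 0 => inferInstanceAs (Fintype ι)
  | n + 1 =>
    letI := iterFintype (ι := ι) n
    inferInstanceAs (Fintype (Iter ι n ⊕ Iter ι n))

def iterDecEq {ι : Type} [DecidableEq ι] : (n : ℕ) → DecidableEq (Iter ι n)
  | 0 => inferInstanceAs (DecidableEq ι)
  | n + 1 =>
    letI := iterDecEq (ι := ι) n
    inferInstanceAs (DecidableEq (Iter ι n ⊕ Iter ι n))

instance {ι : Type} [Fintype ι] (n : ℕ) : Fintype (Iter ι n) := iterFintype n
instance {ι : Type} [DecidableEq ι] (n : ℕ) : DecidableEq (Iter ι n) := iterDecEq n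

/-- The sequence of matrices `M₁ = A`, `M_{n+1} = [[Mₙ, -I],[I, Mₙ + 2I]]`;
here `Mseq A n = M_{n+1}`. -/
def Mseq {k : Type} [Field k] {ι : Type} [Fintype ι] [DecidableEq ι]
    (A : Matrix ι ι k) : (n : ℕ) → Matrix (Iter ι n) (Iter ι n) k
  | 0 => A
  | n + 1 => Matrix.fromBlocks (Mseq A n) (-1) 1 (Mseq A n + (2 : k) • 1)

open Matrix

/-- Conjugating by `[[1, 1], [0, 1]]` makes `[[Y, -1], [1, Y + 2]]` block lower triangular,
with both diagonal blocks equal to `Y + 1`. -/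
theorem Matrix.det_fromBlocks_neg_one_one {m R : Type*} [Fintype m] [DecidableEq m] [CommRing R]
    (Y : Matrix m m R) :
    (fromBlocks Y (-1) 1 (Y + (2 : R) • 1)).det = (Y + 1).det ^ 2 := by
  have conj : fromBlocks 1 1 0 1 * fromBlocks Y (-1) 1 (Y + (2 : R) • 1) * fromBlocks 1 (-1) 0 1 =
      fromBlocks (Y + 1) 0 1 (Y + 1) := by
    simp only [fromBlocks_multiply, two_smul]
    congr 1 <;> simp <;> abel
  have := congrArg det conj
  rwa [det_mul, det_mul, det_fromBlocks_zero₂₁, det_fromBlocks_zero₂₁, det_fromBlocks_zero₁₂,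
    det_one, one_mul, one_mul, mul_one, ← sq] at this

theorem Matrix.fromBlocks_add_smul_one {m n R : Type*} [DecidableEq m] [DecidableEq n]
    [CommRing R] (A : Matrix m m R) (B : Matrix m n R) (C : Matrix n m R) (D : Matrix n n R)
    (c : R) :
    fromBlocks A B C D + c • 1 = fromBlocks (A + c • 1) B C (D + c • 1) := by
  simp only [← fromBlocks_one, fromBlocks_smul, fromBlocks_add, smul_zero, add_zero]

theorem det_Mseq_succ_add_smul_one {k ι : Type} [Field k] [Fintype ι] [DecidableEq ι]
    (A : Matrix ι ι k) (n : ℕ) (lam : k) :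
    (Mseq A (n + 1) + lam • 1).det = (Mseq A n + (lam + 1) • 1).det ^ 2 := by
  have := det_fromBlocks_neg_one_one (Mseq A n + lam • 1)
  rw [add_right_comm, ← fromBlocks_add_smul_one] at this
  rwa [add_smul, one_smul, ← add_assoc]

theorem det_Mseq_add_smul_one {k ι : Type} [Field k] [Fintype ι] [DecidableEq ι]
    (A : Matrix ι ι k) (n : ℕ) (lam : k) :
    (Mseq A n + lam • 1).det = (A + (lam + n) • 1).det ^ 2 ^ n := by
  induction n generalizing lam with
  | zero => rw [pow_zero, pow_one, Nat.cast_zero, add_zero]; rfl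
  | succ n ih =>
    rw [det_Mseq_succ_add_smul_one, ih, ← pow_mul, ← pow_succ, Nat.cast_succ, add_assoc,
      add_comm 1 (n : k)]

/-- For the sequence `M_{n+1} = [[Mₙ, -I],[I, Mₙ + 2I]]` one has
`det(M_{n+1} + λI) = det(M₁ + (λ+n)I)^{2ⁿ}` for all `λ` and `n ≥ 0`; in
particular, if `det(M₁ + nI) ≠ 0` for all `n ≥ 0`, then every `M_{n+1}` is
invertible. -/
theorem det_block_recursion
    {k : Type} [Field k] {ι : Type} [Fintype ι] [DecidableEq ι]
    (A : Matrix ι ι k) :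
    (∀ (n : ℕ) (lam : k),
      (Mseq A n + lam • 1).det = ((A + (lam + n) • 1).det) ^ (2 ^ n)) ∧
    ((∀ n : ℕ, (A + (n : k) • 1).det ≠ 0) → ∀ n : ℕ, IsUnit (Mseq A n)) := by
  refine ⟨det_Mseq_add_smul_one A, fun h n => ?_⟩
  have hdet := det_Mseq_add_smul_one A n 0
  rw [zero_smul, add_zero, zero_add] at hdet
  rw [isUnit_iff_isUnit_det, hdet, isUnit_iff_ne_zero]
  exact pow_ne_zero _ (h n)
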